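/- Let X be a random variable taking values in ℂ \ {z : Re z = 0, Im z ≤ 0} with E[|X|^δ] < ∞ for some δ > 0 and E[|log X|] < ∞. Then lim_{x → 0+} E[X^x]^{1/x} = exp(E[log X]) and lim_{x → 0+} E[|X|^x]^{1/x} = exp(E[log|X|]). -/

import Mathlib

open Complex MeasureTheory Filter

/-- The paper's branch of the logarithm: `log (r e^{iθ}) = log r + iθ` with
`r > 0` and `-π/2 ≤ θ < 3π/2`. It agrees with `Complex.log` except on the open
third quadrant, where `2πi` is added. -/
noncomputable def plog (z : ℂ) : ℂ :=
  if z.re < 0 ∧ z.im < 0 then Complex.log z + 2 * Real.pi * Complex.I else Complex.log z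

/-- Complex power `z^w := exp (w log z)` with the paper's branch of logarithm. -/
noncomputable def ppow (z w : ℂ) : ℂ := Complex.exp (w * plog z)

/-- The Cauchy distribution `C(m, σ)` with density `(σ/π)/((x-m)² + σ²)`. -/
noncomputable def cauchyMeasure (m σ : ℝ) : Measure ℝ :=
  MeasureTheory.volume.withDensity
    (fun x => ENNReal.ofReal ((σ / Real.pi) / ((x - m) ^ 2 + σ ^ 2)))

section Aux
open Set

lemma norm_cexp_sub_one_le (w : ℂ) :
    ‖Complex.exp w - 1‖ ≤ ‖w‖ * max 1 (Real.exp w.re) := by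
  have hderiv : ∀ t ∈ Icc (0:ℝ) 1,
      HasDerivWithinAt (fun t : ℝ => Complex.exp ((t : ℂ) * w))
        (w * Complex.exp ((t : ℂ) * w)) (Icc 0 1) t := by
    intro t _
    have h1 : HasDerivAt (fun z : ℂ => Complex.exp (z * w)) (w * Complex.exp ((t:ℂ) * w)) (t:ℂ) := by
      simpa [mul_comm] using ((hasDerivAt_id ((t:ℂ))).mul_const w).cexp
    exact (h1.comp_ofReal).hasDerivWithinAt
  have hbound : ∀ t ∈ Icc (0:ℝ) 1,
      ‖w * Complex.exp ((t : ℂ) * w)‖ ≤ ‖w‖ * max 1 (Real.exp w.re) := by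
    intro t ht
    rw [norm_mul]
    refine mul_le_mul_of_nonneg_left ?_ (norm_nonneg w)
    rw [Complex.norm_exp]
    have hre : ((t:ℂ) * w).re = t * w.re := by simp
    rw [hre]
    rcases le_or_gt 0 w.re with h | h
    · exact le_max_of_le_right (Real.exp_le_exp.2 (by nlinarith [ht.1, ht.2]))
    · exact le_max_of_le_left (by rw [← Real.exp_zero]; exact Real.exp_le_exp.2 (by nlinarith [ht.1, ht.2]))
  have := (convex_Icc (0:ℝ) 1).norm_image_sub_le_of_norm_hasDerivWithin_le hderiv hbound
      (left_mem_Icc.2 zero_le_one) (right_mem_Icc.2 zero_le_one)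
  simpa using this

noncomputable def hC (u : ℂ) : ℂ := if u = 0 then 1 else Complex.log (1 + u) / u
noncomputable def hR (u : ℝ) : ℝ := if u = 0 then 1 else Real.log (1 + u) / u

lemma tendsto_hC : Tendsto hC (nhds 0) (nhds 1) := by
  have h1 : HasDerivAt Complex.log 1 1 := by
    simpa using Complex.hasDerivAt_log (by simp [Complex.slitPlane] : (1:ℂ) ∈ Complex.slitPlane)
  have h2 : Tendsto (slope Complex.log 1) (nhdsWithin 1 {(1:ℂ)}ᶜ) (nhds 1) :=
    hasDerivAt_iff_tendsto_slope.1 h1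
  have h3 : Tendsto (fun u : ℂ => 1 + u) (nhdsWithin 0 {(0:ℂ)}ᶜ) (nhdsWithin 1 {(1:ℂ)}ᶜ) := by
    apply tendsto_nhdsWithin_of_tendsto_nhds_of_eventually_within
    · have h : Tendsto (fun u : ℂ => 1 + u) (nhds 0) (nhds 1) := by
        simpa using (continuous_add_left (1:ℂ)).tendsto (0:ℂ)
      exact h.mono_left nhdsWithin_le_nhds
    · filter_upwards [self_mem_nhdsWithin] with u hu
      simpa using hu
  have h4 : Tendsto hC (nhdsWithin 0 {(0:ℂ)}ᶜ) (nhds 1) := by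
    refine (h2.comp h3).congr' ?_
    filter_upwards [self_mem_nhdsWithin] with u hu
    have hu0 : u ≠ 0 := hu
    simp [hC, hu0, slope, Function.comp, Complex.log_one, div_eq_inv_mul]
  rw [← nhdsNE_sup_pure (0:ℂ)]
  refine h4.sup ?_
  rw [tendsto_pure_left]
  intro s hs
  simpa [hC] using mem_of_mem_nhds hs

lemma tendsto_hR : Tendsto hR (nhds 0) (nhds 1) := by
  have h1 : HasDerivAt Real.log 1 1 := by
    simpa using Real.hasDerivAt_log one_ne_zero
  have h2 : Tendsto (slope Real.log 1) (nhdsWithin 1 {(1:ℝ)}ᶜ) (nhds 1) :=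
    hasDerivAt_iff_tendsto_slope.1 h1
  have h3 : Tendsto (fun u : ℝ => 1 + u) (nhdsWithin 0 {(0:ℝ)}ᶜ) (nhdsWithin 1 {(1:ℝ)}ᶜ) := by
    apply tendsto_nhdsWithin_of_tendsto_nhds_of_eventually_within
    · have h : Tendsto (fun u : ℝ => 1 + u) (nhds 0) (nhds 1) := by
        simpa using (continuous_add_left (1:ℝ)).tendsto (0:ℝ)
      exact h.mono_left nhdsWithin_le_nhds
    · filter_upwards [self_mem_nhdsWithin] with u hu
      simpa using hu
  have h4 : Tendsto hR (nhdsWithin 0 {(0:ℝ)}ᶜ) (nhds 1) := by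
    refine (h2.comp h3).congr' ?_
    filter_upwards [self_mem_nhdsWithin] with u hu
    have hu0 : u ≠ 0 := hu
    simp [hR, hu0, slope, Function.comp, Real.log_one, div_eq_inv_mul]
  rw [← nhdsNE_sup_pure (0:ℝ)]
  refine h4.sup ?_
  rw [tendsto_pure_left]
  intro s hs
  simpa [hR] using mem_of_mem_nhds hs

lemma logidC (x : ℝ) (hx : x ≠ 0) (a : ℂ) :
    (x:ℂ)⁻¹ * Complex.log (1 + (x:ℂ) * a) = a * hC ((x:ℂ) * a) := by
  have hxc : (x:ℂ) ≠ 0 := Complex.ofReal_ne_zero.2 hx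
  by_cases h : (x:ℂ) * a = 0
  · have ha : a = 0 := by
      rcases mul_eq_zero.1 h with h' | h'
      · exact absurd h' hxc
      · exact h'
    simp [ha]
  · rw [hC, if_neg h]
    have ha : a ≠ 0 := fun h' => h (by simp [h'])
    field_simp

lemma logidR (x : ℝ) (hx : x ≠ 0) (a : ℝ) :
    x⁻¹ * Real.log (1 + x * a) = a * hR (x * a) := by
  by_cases h : x * a = 0
  · have ha : a = 0 := by
      rcases mul_eq_zero.1 h with h' | h'
      · exact absurd h' hx
      · exact h'
    simp [ha]
  · rw [hR, if_neg h]
    have ha : a ≠ 0 := fun h' => h (by simp [h'])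
    field_simp

end Aux

theorem stmt_8 {Ω : Type*} [MeasurableSpace Ω] (μ : Measure Ω) [IsProbabilityMeasure μ]
    (X : Ω → ℂ) (hX : AEMeasurable X μ)
    (hdom : ∀ ω, ¬((X ω).re = 0 ∧ (X ω).im ≤ 0))
    (δ : ℝ) (hδ : 0 < δ)
    (hint : Integrable (fun ω => ‖X ω‖ ^ δ) μ)
    (hlog : Integrable (fun ω => ‖plog (X ω)‖) μ) :
    Tendsto (fun x : ℝ => Complex.exp ((x : ℂ)⁻¹ * plog (∫ ω, ppow (X ω) (x : ℂ) ∂μ)))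
        (nhdsWithin 0 (Set.Ioi 0)) (nhds (Complex.exp (∫ ω, plog (X ω) ∂μ))) ∧
    Tendsto (fun x : ℝ => (∫ ω, ‖X ω‖ ^ x ∂μ) ^ (1 / x))
        (nhdsWithin 0 (Set.Ioi 0))
        (nhds (Real.exp (∫ ω, Real.log (‖X ω‖) ∂μ))) := by
  have hδ2 : (0:ℝ) < δ/2 := by linarith
  have hXne : ∀ ω, X ω ≠ 0 := by
    intro ω h
    exact hdom ω (by simp [h])
  have habs_pos : ∀ ω, 0 < ‖X ω‖ := fun ω => norm_pos_iff.2 (hXne ω)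
  set L : Ω → ℂ := fun ω => plog (X ω) with hLdef
  set L' : Ω → ℝ := fun ω => Real.log (‖X ω‖) with hL'def
  have hReL : ∀ ω, (L ω).re = L' ω := by
    intro ω
    simp only [hLdef, plog]
    split <;> simp [Complex.log_re, hL'def]
  -- measurability
  have hcondm : MeasurableSet {z : ℂ | z.re < 0 ∧ z.im < 0} :=
    (measurableSet_lt (Complex.measurable_re) measurable_const).inter
      (measurableSet_lt (Complex.measurable_im) measurable_const)
  have hplogm : Measurable plog := by
    unfold plog
    exact Measurable.ite hcondm (Complex.measurable_log.add measurable_const) Complex.measurable_log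
  have hLam : AEMeasurable L μ := hplogm.comp_aemeasurable hX
  have hLsm : AEStronglyMeasurable L μ := hLam.aestronglyMeasurable
  have hL'am : AEMeasurable L' μ :=
    (Real.measurable_log.comp continuous_norm.measurable).comp_aemeasurable hX
  have hL'sm : AEStronglyMeasurable L' μ := hL'am.aestronglyMeasurable
  have hLint : Integrable L μ := by
    refine (integrable_norm_iff hLsm).1 ?_
    simpa using hlog
  have hL'int : Integrable L' μ := by
    refine hlog.mono' hL'sm (ae_of_all μ fun ω => ?_)
    rw [Real.norm_eq_abs, ← hReL ω]
    exact Complex.abs_re_le_norm _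
  -- dominating function
  set C : ℝ := 2/δ + 3*Real.pi with hCdef
  set g : Ω → ℝ := fun ω => ‖L ω‖ + C * (1 + ‖X ω‖ ^ δ) with hgdef
  have hgint : Integrable g μ := hlog.add (((integrable_const (1:ℝ)).add hint).const_mul C)
  have hLbound : ∀ ω, ‖L ω‖ ≤ |L' ω| + 3 * Real.pi := by
    intro ω
    have h1 : ‖L ω‖ ≤ |(L ω).re| + |(L ω).im| := Complex.norm_le_abs_re_add_abs_im _
    have h2 : |(L ω).im| ≤ 3 * Real.pi := by
      have harg := Complex.abs_arg_le_pi (X ω)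
      have hpi := Real.pi_pos
      simp only [hLdef, plog]
      split
      · have him : (Complex.log (X ω) + 2*(Real.pi:ℂ)*Complex.I).im = Complex.arg (X ω) + 2*Real.pi := by
          simp [Complex.log_im]
        rw [him, abs_le]
        rw [abs_le] at harg
        constructor <;> nlinarith [harg.1, harg.2]
      · rw [Complex.log_im]
        rw [abs_le] at harg ⊢
        constructor <;> nlinarith [harg.1, harg.2]
    rw [hReL ω] at h1
    linarith
  have hexp_eq : ∀ (x : ℝ) ω, Real.exp (x * L' ω) = ‖X ω‖ ^ x := by
    intro x ω
    rw [Real.rpow_def_of_pos (habs_pos ω), mul_comm]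
  -- key bound
  have hkey : ∀ x ∈ Set.Ioc (0:ℝ) (δ/2), ∀ ω,
      ‖L ω‖ * max 1 (Real.exp (x * L' ω)) ≤ g ω := by
    intro x hx ω
    have ha := habs_pos ω
    have hpi := Real.pi_pos
    have habsLnn : (0:ℝ) ≤ ‖L ω‖ := norm_nonneg _
    have hδnn : (0:ℝ) ≤ ‖X ω‖ ^ δ := Real.rpow_nonneg ha.le δ
    rcases le_or_gt 1 (‖X ω‖) with hb | hb
    · have hL'nn : 0 ≤ L' ω := Real.log_nonneg hb
      have hthalf : (0:ℝ) < ‖X ω‖ ^ (δ/2) := Real.rpow_pos_of_pos ha _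
      have h1 : ‖X ω‖ ^ x ≤ ‖X ω‖ ^ (δ/2) :=
        Real.rpow_le_rpow_of_exponent_le hb hx.2
      have h2 : max 1 (Real.exp (x * L' ω)) ≤ ‖X ω‖ ^ (δ/2) := by
        apply max_le
        · exact Real.one_le_rpow hb hδ2.le
        · rw [hexp_eq]; exact h1
      have hlog2 : Real.log (‖X ω‖ ^ (δ/2)) = (δ/2) * L' ω := Real.log_rpow ha _
      have h3 : (δ/2) * L' ω ≤ ‖X ω‖ ^ (δ/2) := by
        rw [← hlog2]
        have := Real.log_le_sub_one_of_pos hthalf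
        linarith
      have hsq : ‖X ω‖ ^ (δ/2) * ‖X ω‖ ^ (δ/2) = ‖X ω‖ ^ δ := by
        rw [← Real.rpow_add ha]
        norm_num
      have h5 : ‖X ω‖ ^ (δ/2) ≤ 1 + ‖X ω‖ ^ δ := by
        have := Real.rpow_le_rpow_of_exponent_le hb (show δ/2 ≤ δ by linarith)
        linarith
      -- |L| * max ≤ (|L'| + 3π) * t^{δ/2} = L' t^{δ/2} + 3π t^{δ/2} ≤ (2/δ) t^δ + 3π(1+t^δ)
      have h6 : ‖L ω‖ * max 1 (Real.exp (x * L' ω)) ≤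
          (L' ω + 3 * Real.pi) * ‖X ω‖ ^ (δ/2) := by
        have hb1 := hLbound ω
        rw [_root_.abs_of_nonneg hL'nn] at hb1
        apply mul_le_mul hb1 h2 (le_trans zero_le_one (le_max_left _ _)) (by linarith)
      have h7 : L' ω * ‖X ω‖ ^ (δ/2) ≤ (2/δ) * ‖X ω‖ ^ δ := by
        have hstep := mul_le_mul_of_nonneg_right h3 hthalf.le
        rw [mul_assoc, hsq] at hstep
        have h2δ : (0:ℝ) ≤ 2/δ := by positivity
        calc L' ω * ‖X ω‖ ^ (δ/2)
            = (2/δ) * (δ/2 * (L' ω * ‖X ω‖ ^ (δ/2))) := by field_simp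
          _ ≤ (2/δ) * ‖X ω‖ ^ δ := by
              refine mul_le_mul_of_nonneg_left ?_ h2δ
              linarith [hstep]
      have h8 : 3 * Real.pi * ‖X ω‖ ^ (δ/2) ≤ 3 * Real.pi * (1 + ‖X ω‖ ^ δ) :=
        mul_le_mul_of_nonneg_left h5 (by positivity)
      have h9 : (2/δ) * ‖X ω‖ ^ δ ≤ (2/δ) * (1 + ‖X ω‖ ^ δ) :=
        mul_le_mul_of_nonneg_left (by linarith) (by positivity)
      rw [hgdef, hCdef]
      simp only []
      calc ‖L ω‖ * max 1 (Real.exp (x * L' ω))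
          ≤ (L' ω + 3 * Real.pi) * ‖X ω‖ ^ (δ/2) := h6
        _ = L' ω * ‖X ω‖ ^ (δ/2) + 3 * Real.pi * ‖X ω‖ ^ (δ/2) := by ring
        _ ≤ (2/δ) * (1 + ‖X ω‖ ^ δ) + 3 * Real.pi * (1 + ‖X ω‖ ^ δ) := by
            linarith [h7, h8, h9]
        _ = (2/δ + 3*Real.pi) * (1 + ‖X ω‖ ^ δ) := by ring
        _ ≤ ‖L ω‖ + (2/δ + 3*Real.pi) * (1 + ‖X ω‖ ^ δ) := by
            linarith [habsLnn]
    · have hmax : max 1 (Real.exp (x * L' ω)) = 1 := by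
        apply max_eq_left
        rw [Real.exp_le_one_iff]
        have : L' ω ≤ 0 := Real.log_nonpos ha.le hb.le
        nlinarith [hx.1]
      rw [hmax, mul_one, hgdef]
      simp only []
      have hC0 : (0:ℝ) ≤ C * (1 + ‖X ω‖ ^ δ) := by
        rw [hCdef]; positivity
      linarith [hC0]
  have hmemIoc : Set.Ioc (0:ℝ) (δ/2) ∈ nhdsWithin (0:ℝ) (Set.Ioi 0) :=
    Ioc_mem_nhdsGT_of_mem (by constructor <;> [exact le_rfl; exact hδ2])
  -- complex part : F and A
  set F : ℝ → Ω → ℂ := fun x ω => (x:ℂ)⁻¹ * (Complex.exp ((x:ℂ) * L ω) - 1) with hFdef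
  have hFsm : ∀ x : ℝ, AEStronglyMeasurable (F x) μ := by
    intro x
    have hc : Continuous fun z : ℂ => (x:ℂ)⁻¹ * (Complex.exp ((x:ℂ) * z) - 1) :=
      continuous_const.mul ((Complex.continuous_exp.comp (continuous_const.mul continuous_id)).sub
        continuous_const)
    exact (hc.measurable.comp_aemeasurable hLam).aestronglyMeasurable
  have hre_mul : ∀ (x : ℝ) ω, ((x:ℂ) * L ω).re = x * L' ω := by
    intro x ω
    rw [← hReL ω]
    simp [Complex.mul_re]
  have hFbound : ∀ x ∈ Set.Ioc (0:ℝ) (δ/2), ∀ ω, ‖F x ω‖ ≤ g ω := by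
    intro x hx ω
    have hx0 : 0 < x := hx.1
    have h1 := norm_cexp_sub_one_le ((x:ℂ) * L ω)
    rw [hre_mul x ω] at h1
    have hnorm : ‖(x:ℂ) * L ω‖ = x * ‖L ω‖ := by
      rw [norm_mul, Complex.norm_real, Real.norm_eq_abs, _root_.abs_of_pos hx0]
    rw [hnorm] at h1
    have h2 : ‖F x ω‖ = x⁻¹ * ‖Complex.exp ((x:ℂ) * L ω) - 1‖ := by
      rw [hFdef]
      simp only []
      rw [norm_mul, norm_inv, Complex.norm_real, Real.norm_eq_abs, _root_.abs_of_pos hx0]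
    rw [h2]
    calc x⁻¹ * ‖Complex.exp ((x:ℂ) * L ω) - 1‖
        ≤ x⁻¹ * (x * ‖L ω‖ * max 1 (Real.exp (x * L' ω))) := by
          exact mul_le_mul_of_nonneg_left h1 (by positivity)
      _ = ‖L ω‖ * max 1 (Real.exp (x * L' ω)) := by
          field_simp
      _ ≤ g ω := hkey x hx ω
  have hFlim : ∀ ω, Tendsto (fun x : ℝ => F x ω) (nhdsWithin 0 (Set.Ioi 0)) (nhds (L ω)) := by
    intro ω
    have h2 : HasDerivAt (fun z : ℂ => Complex.exp (z * L ω)) (L ω) (((0:ℝ):ℂ)) := by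
      simpa using ((hasDerivAt_id (((0:ℝ):ℂ))).mul_const (L ω)).cexp
    have h1 : HasDerivAt (fun x : ℝ => Complex.exp ((x:ℂ) * L ω)) (L ω) 0 := h2.comp_ofReal
    have h3 := hasDerivAt_iff_tendsto_slope.1 h1
    have h4 : nhdsWithin (0:ℝ) (Set.Ioi 0) ≤ nhdsWithin 0 {(0:ℝ)}ᶜ :=
      nhdsWithin_mono 0 (fun y hy => ne_of_gt hy)
    refine (h3.mono_left h4).congr fun x => ?_
    simp [slope, hFdef, Complex.real_smul, Complex.ofReal_inv]
  have hA : Tendsto (fun x : ℝ => ∫ ω, F x ω ∂μ) (nhdsWithin 0 (Set.Ioi 0))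
      (nhds (∫ ω, L ω ∂μ)) := by
    refine tendsto_integral_filter_of_dominated_convergence g ?_ ?_ hgint ?_
    · filter_upwards with x using hFsm x
    · filter_upwards [hmemIoc] with x hx
      exact ae_of_all μ (hFbound x hx)
    · exact ae_of_all μ hFlim
  set A : ℝ → ℂ := fun x => ∫ ω, F x ω ∂μ with hAdef
  have hrpow_le : ∀ x ∈ Set.Ioc (0:ℝ) (δ/2), ∀ ω,
      ‖X ω‖ ^ x ≤ 1 + ‖X ω‖ ^ δ := by
    intro x hx ω
    have ha := habs_pos ω
    have hδnn : (0:ℝ) ≤ ‖X ω‖ ^ δ := Real.rpow_nonneg ha.le δ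
    rcases le_or_gt 1 (‖X ω‖) with hb | hb
    · have := Real.rpow_le_rpow_of_exponent_le hb (show x ≤ δ by linarith [hx.2])
      linarith
    · have : ‖X ω‖ ^ x ≤ 1 := Real.rpow_le_one ha.le hb.le hx.1.le
      linarith
  have hFint : ∀ x ∈ Set.Ioc (0:ℝ) (δ/2), Integrable (F x) μ := by
    intro x hx
    exact Integrable.mono' hgint (hFsm x) (ae_of_all μ (hFbound x hx))
  have hIid : ∀ x ∈ Set.Ioc (0:ℝ) (δ/2),
      (∫ ω, ppow (X ω) (x:ℂ) ∂μ) = 1 + (x:ℂ) * A x := by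
    intro x hx
    have hx0 : (x:ℂ) ≠ 0 := by
      exact_mod_cast ne_of_gt hx.1
    have h1 : ∀ ω, ppow (X ω) (x:ℂ) = 1 + (x:ℂ) * F x ω := by
      intro ω
      rw [ppow, hFdef]
      simp only []
      field_simp
      simp [hLdef]
    have h2 : (∫ ω, ppow (X ω) (x:ℂ) ∂μ) = ∫ ω, (1 + (x:ℂ) * F x ω) ∂μ := by
      exact integral_congr_ae (ae_of_all μ h1)
    rw [h2, integral_add (integrable_const 1) ((hFint x hx).const_mul _ ),
      integral_const, integral_const_mul, probReal_univ]
    simp [hAdef]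
  -- limits
  have hxA0 : Tendsto (fun x : ℝ => (x:ℂ) * A x) (nhdsWithin 0 (Set.Ioi 0)) (nhds 0) := by
    have hx : Tendsto (fun x : ℝ => ((x:ℝ):ℂ)) (nhdsWithin 0 (Set.Ioi 0)) (nhds 0) := by
      have := (Complex.continuous_ofReal.tendsto 0).mono_left
        (nhdsWithin_le_nhds (s := Set.Ioi (0:ℝ)))
      simpa using this
    simpa using hx.mul hA
  have hIto1 : Tendsto (fun x : ℝ => 1 + (x:ℂ) * A x) (nhdsWithin 0 (Set.Ioi 0)) (nhds 1) := by
    simpa using tendsto_const_nhds.add hxA0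
  have hre_ev : ∀ᶠ (x:ℝ) in nhdsWithin (0:ℝ) (Set.Ioi 0), 0 < (1 + (x:ℂ) * A x).re := by
    have hopen : {z : ℂ | 0 < z.re} ∈ nhds (1:ℂ) :=
      (isOpen_lt continuous_const Complex.continuous_re).mem_nhds (by simp)
    exact hIto1.eventually hopen
  constructor
  · -- complex limit
    have hfin : Tendsto (fun x : ℝ => Complex.exp (A x * hC ((x:ℂ) * A x)))
        (nhdsWithin 0 (Set.Ioi 0)) (nhds (Complex.exp (∫ ω, L ω ∂μ))) := by
      have := (hA.mul (tendsto_hC.comp hxA0)).cexp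
      simpa using this
    refine hfin.congr' ?_
    filter_upwards [hmemIoc, hre_ev] with x hx hre
    rw [hIid x hx]
    have hplogI : plog (1 + (x:ℂ) * A x) = Complex.log (1 + (x:ℂ) * A x) := by
      rw [plog, if_neg]
      rintro ⟨h1, _⟩
      linarith
    rw [hplogI, logidC x (ne_of_gt hx.1) (A x)]
  · -- real limit
    set F' : ℝ → Ω → ℝ := fun x ω => x⁻¹ * (Real.exp (x * L' ω) - 1) with hF'def
    have hF'sm : ∀ x : ℝ, AEStronglyMeasurable (F' x) μ := by
      intro x
      have hc : Continuous fun t : ℝ => x⁻¹ * (Real.exp (x * t) - 1) :=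
        continuous_const.mul ((Real.continuous_exp.comp
          (continuous_const.mul continuous_id)).sub continuous_const)
      exact (hc.measurable.comp_aemeasurable hL'am).aestronglyMeasurable
    have hF'bound : ∀ x ∈ Set.Ioc (0:ℝ) (δ/2), ∀ ω, ‖F' x ω‖ ≤ g ω := by
      intro x hx ω
      have hx0 : 0 < x := hx.1
      have h2 : Complex.exp (((x * L' ω : ℝ)) : ℂ) - 1 = ((Real.exp (x * L' ω) - 1 : ℝ) : ℂ) := by
        push_cast
        ring
      have h1 := norm_cexp_sub_one_le (((x * L' ω : ℝ)) : ℂ)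
      rw [h2, Complex.norm_real, Complex.norm_real, Real.norm_eq_abs, Real.norm_eq_abs,
        Complex.ofReal_re] at h1
      have h3 : ‖F' x ω‖ = x⁻¹ * |Real.exp (x * L' ω) - 1| := by
        rw [hF'def]
        simp only []
        rw [Real.norm_eq_abs, abs_mul, abs_inv, _root_.abs_of_pos hx0]
      have h4 : |L' ω| ≤ ‖L ω‖ := by
        rw [← hReL ω]
        exact Complex.abs_re_le_norm _
      have hmaxnn : (0:ℝ) ≤ max 1 (Real.exp (x * L' ω)) := le_trans zero_le_one (le_max_left _ _)
      rw [h3]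
      calc x⁻¹ * |Real.exp (x * L' ω) - 1|
          ≤ x⁻¹ * (|x * L' ω| * max 1 (Real.exp (x * L' ω))) := by
            exact mul_le_mul_of_nonneg_left h1 (by positivity)
        _ = |L' ω| * max 1 (Real.exp (x * L' ω)) := by
            rw [abs_mul, _root_.abs_of_pos hx0]
            field_simp
        _ ≤ ‖L ω‖ * max 1 (Real.exp (x * L' ω)) :=
            mul_le_mul_of_nonneg_right h4 hmaxnn
        _ ≤ g ω := hkey x hx ω
    have hF'lim : ∀ ω, Tendsto (fun x : ℝ => F' x ω) (nhdsWithin 0 (Set.Ioi 0))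
        (nhds (L' ω)) := by
      intro ω
      have h1 : HasDerivAt (fun x : ℝ => Real.exp (x * L' ω)) (L' ω) 0 := by
        simpa using ((hasDerivAt_id (0:ℝ)).mul_const (L' ω)).exp
      have h3 := hasDerivAt_iff_tendsto_slope.1 h1
      refine (h3.mono_left (nhdsWithin_mono 0 fun y hy => ne_of_gt hy)).congr fun x => ?_
      simp [slope, hF'def, smul_eq_mul]
    have hA' : Tendsto (fun x : ℝ => ∫ ω, F' x ω ∂μ) (nhdsWithin 0 (Set.Ioi 0))
        (nhds (∫ ω, L' ω ∂μ)) := by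
      refine tendsto_integral_filter_of_dominated_convergence g ?_ ?_ hgint ?_
      · filter_upwards with x using hF'sm x
      · filter_upwards [hmemIoc] with x hx
        exact ae_of_all μ (hF'bound x hx)
      · exact ae_of_all μ hF'lim
    set A' : ℝ → ℝ := fun x => ∫ ω, F' x ω ∂μ with hA'def
    have hF'int : ∀ x ∈ Set.Ioc (0:ℝ) (δ/2), Integrable (F' x) μ := by
      intro x hx
      exact Integrable.mono' hgint (hF'sm x) (ae_of_all μ (hF'bound x hx))
    have hB : ∀ x ∈ Set.Ioc (0:ℝ) (δ/2),
        (∫ ω, ‖X ω‖ ^ x ∂μ) = 1 + x * A' x := by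
      intro x hx
      have hx0 : x ≠ 0 := ne_of_gt hx.1
      have h1 : ∀ ω, ‖X ω‖ ^ x = 1 + x * F' x ω := by
        intro ω
        rw [← hexp_eq, hF'def]
        simp only []
        field_simp
        ring
      rw [integral_congr_ae (ae_of_all μ h1),
        integral_add (integrable_const 1) ((hF'int x hx).const_mul _),
        integral_const, integral_const_mul, probReal_univ]
      simp [hA'def]
    have hxA0' : Tendsto (fun x : ℝ => x * A' x) (nhdsWithin 0 (Set.Ioi 0)) (nhds 0) := by
      have hx : Tendsto (fun x : ℝ => x) (nhdsWithin (0:ℝ) (Set.Ioi 0)) (nhds 0) :=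
        tendsto_id.mono_left nhdsWithin_le_nhds
      simpa using hx.mul hA'
    have hBpos : ∀ᶠ (x:ℝ) in nhdsWithin (0:ℝ) (Set.Ioi 0), 0 < 1 + x * A' x := by
      have h1 : Tendsto (fun x : ℝ => 1 + x * A' x) (nhdsWithin 0 (Set.Ioi 0)) (nhds 1) := by
        simpa using tendsto_const_nhds.add hxA0'
      exact h1.eventually (eventually_gt_nhds one_pos)
    have hfin : Tendsto (fun x : ℝ => Real.exp (A' x * hR (x * A' x)))
        (nhdsWithin 0 (Set.Ioi 0)) (nhds (Real.exp (∫ ω, L' ω ∂μ))) := by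
      have := (Real.continuous_exp.tendsto _).comp (hA'.mul (tendsto_hR.comp hxA0'))
      simp only [mul_one] at this
      exact this
    refine hfin.congr' ?_
    filter_upwards [hmemIoc, hBpos] with x hx hpos
    rw [hB x hx, Real.rpow_def_of_pos hpos, ← logidR x (ne_of_gt hx.1) (A' x)]
    congr 1
    rw [one_div]
    ring
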